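/- Fix a nominal reward R₀ : S → A → ℝ, α > 0, and p ∈ (1,∞) with Hölder conjugate q = p/(p-1). Define F : (S → A → ℝ) → ℝ by F(π) = ∑_{s,a} D(π)(s,a) * R₀(s,a) - α * (∑_{s,a} D(π)(s,a)^q)^{1/q}, where D(π)(s,a) = (μᵀ (I - γ P^π)⁻¹)(s) * π(s,a) is defined using Mathlib's matrix inverse (which at every policy is the genuine inverse). Then F, which on policies equals the reward-robust return ρ^π_{𝓡_p} = min_{‖R-R₀‖_p ≤ α} ρ^π_R, is infinitely continuously differentiable (ContDiffAt ℝ ⊤) at every policy π satisfying π(s,a) > 0 for all (s,a); in particular all entries D(π)(s,a) are strictly positive at such π. -/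

import Mathlib

open Finset

noncomputable section

/-- `P^π(s,s') = ∑ a, π s a * P s a s'`. -/
def Pmat {S A : Type*} [Fintype A] (P : S → A → S → ℝ) (π : S → A → ℝ) :
    Matrix S S ℝ := fun s s' => ∑ a, π s a * P s a s'

/-- state occupation measure `d^π = μᵀ (I - γ P^π)⁻¹`. -/
def dPi {S A : Type*} [Fintype S] [Fintype A] [DecidableEq S]
    (γ : ℝ) (P : S → A → S → ℝ) (μ : S → ℝ) (π : S → A → ℝ) : S → ℝ :=
  fun s' => ∑ s, μ s * (1 - γ • Pmat P π)⁻¹ s s'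

/-- state-action occupation measure `d^π(s,a) = d^π(s) * π s a`. -/
def dSA {S A : Type*} [Fintype S] [Fintype A] [DecidableEq S]
    (γ : ℝ) (P : S → A → S → ℝ) (μ : S → ℝ) (π : S → A → ℝ) : S → A → ℝ :=
  fun s a => dPi γ P μ π s * π s a

/-- return `ρ^π_R = ∑_{s,a} d^π(s,a) * R(s,a)`. -/
def mdpReturn {S A : Type*} [Fintype S] [Fintype A] [DecidableEq S]
    (γ : ℝ) (P : S → A → S → ℝ) (μ : S → ℝ) (π : S → A → ℝ) (R : S → A → ℝ) : ℝ :=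
  ∑ s, ∑ a, dSA γ P μ π s a * R s a

/-- `‖x‖_r = (∑_{s,a} |x(s,a)|^r)^{1/r}` with real exponents via `Real.rpow`. -/
def LpNorm {S A : Type*} [Fintype S] [Fintype A] (r : ℝ) (x : S → A → ℝ) : ℝ :=
  (∑ s, ∑ a, |x s a| ^ r) ^ (1 / r)

end

/-- stationary policy predicate -/
def IsPolicy {S A : Type*} [Fintype A] (π : S → A → ℝ) : Prop :=
  (∀ s a, 0 ≤ π s a) ∧ ∀ s, ∑ a, π s a = 1

/-!
At a policy `P^π` is row stochastic, so in the `ℓ∞` operator norm (maximal absolute row sum)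
`‖γ P^π‖ ≤ γ < 1`. Hence `1 - γ P^π` is a unit whose inverse is the Neumann series
`∑ γᵏ (P^π)ᵏ`: entrywise nonnegative with diagonal entries at least `1`, which together with
`μ > 0` makes the occupation measure positive. Inversion is smooth on the units of a Banach
algebra and `π ↦ 1 - γ P^π` is affine, so `D` is smooth near `π`; since every `D(π)(s,a)` is
positive, `F` is smooth there because `rpow` is smooth away from `0`.
-/

namespace Matrix

variable {n : Type*} [Fintype n] [DecidableEq n]

section LinftyOpNorm

attribute [local instance] Matrix.linftyOpNormedRing Matrix.linftyOpNormedAlgebra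

theorem linfty_opNorm_le_one_of_mem_rowStochastic {B : Matrix n n ℝ}
    (hB : B ∈ rowStochastic ℝ n) : ‖B‖ ≤ 1 := by
  rw [linfty_opNorm_def]
  norm_cast
  refine Finset.sup_le fun i _ => le_of_eq ?_
  rw [← NNReal.coe_inj]
  push_cast
  simp only [Real.norm_of_nonneg (nonneg_of_mem_rowStochastic hB),
    sum_row_of_mem_rowStochastic hB]

theorem contDiffAt_inv_sub_linearMap_apply {E : Type*} [NormedAddCommGroup E] [NormedSpace ℝ E]
    [FiniteDimensional ℝ E] {k : WithTop ℕ∞} (C : Matrix n n ℝ) (L : E →ₗ[ℝ] Matrix n n ℝ)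
    {x : E} (hx : IsUnit (C - L x)) (i j : n) :
    ContDiffAt ℝ k (fun e => (C - L e)⁻¹ i j) x := by
  obtain ⟨u, hu⟩ := hx
  have hR : ContDiffAt ℝ k Ring.inverse (C - L x) := hu ▸ contDiffAt_ringInverse ℝ u
  have hCL : ContDiff ℝ k (fun e => C - L e) :=
    contDiff_const.sub (LinearMap.toContinuousLinearMap L).contDiff
  simp only [nonsing_inv_eq_ringInverse]
  have hinv := hR.comp x hCL.contDiffAt
  exact (LinearMap.toContinuousLinearMap (entryLinearMap ℝ ℝ i j)).contDiff.contDiffAt.comp x hinv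

variable {γ : ℝ} (hγ0 : 0 ≤ γ) (hγ1 : γ < 1) {B : Matrix n n ℝ} (hB : B ∈ rowStochastic ℝ n)
include hγ0 hγ1 hB

theorem norm_smul_lt_one_of_mem_rowStochastic : ‖γ • B‖ < 1 :=
  calc ‖γ • B‖ ≤ ‖γ‖ * ‖B‖ := norm_smul_le γ B
    _ ≤ γ * 1 := by
      rw [Real.norm_of_nonneg hγ0]
      exact mul_le_mul_of_nonneg_left (linfty_opNorm_le_one_of_mem_rowStochastic hB) hγ0
    _ < 1 := by linarith

theorem isUnit_one_sub_smul_of_mem_rowStochastic : IsUnit (1 - γ • B) :=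
  (Units.oneSub _ (norm_smul_lt_one_of_mem_rowStochastic hγ0 hγ1 hB)).isUnit

theorem hasSum_inv_one_sub_smul_apply (i j : n) :
    HasSum (fun k : ℕ => γ ^ k * (B ^ k) i j) ((1 - γ • B)⁻¹ i j) := by
  have hnorm := norm_smul_lt_one_of_mem_rowStochastic hγ0 hγ1 hB
  have hsum : HasSum (fun k : ℕ => (γ • B) ^ k) (1 - γ • B)⁻¹ := by
    rw [nonsing_inv_eq_ringInverse, ← geom_series_eq_inverse _ hnorm]
    exact (summable_geometric_of_norm_lt_one hnorm).hasSum
  simpa only [smul_pow, smul_apply, smul_eq_mul] using Pi.hasSum.mp (Pi.hasSum.mp hsum i) j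

theorem inv_one_sub_smul_nonneg (i j : n) : 0 ≤ (1 - γ • B)⁻¹ i j :=
  (hasSum_inv_one_sub_smul_apply hγ0 hγ1 hB i j).nonneg fun k =>
    mul_nonneg (pow_nonneg hγ0 k) (nonneg_of_mem_rowStochastic (pow_mem hB k))

theorem one_le_inv_one_sub_smul_diag (i : n) : 1 ≤ (1 - γ • B)⁻¹ i i := by
  simpa using le_hasSum (hasSum_inv_one_sub_smul_apply hγ0 hγ1 hB i i) 0 fun k _ =>
    mul_nonneg (pow_nonneg hγ0 k) (nonneg_of_mem_rowStochastic (pow_mem hB k))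

end LinftyOpNorm

end Matrix

section OccupationMeasure

variable {S A : Type*} [Fintype S] [Fintype A] [DecidableEq S] {P : S → A → S → ℝ}

def pmatLinearMap (P : S → A → S → ℝ) : (S → A → ℝ) →ₗ[ℝ] Matrix S S ℝ where
  toFun := Pmat P
  map_add' π π' := by
    ext s s'
    simp only [Pmat, Pi.add_apply, add_mul, sum_add_distrib, Matrix.add_apply]
  map_smul' c π := by
    ext s s'
    simp only [Pmat, Pi.smul_apply, smul_eq_mul, mul_assoc, ← mul_sum, RingHom.id_apply,
      Matrix.smul_apply]

theorem Pmat_mem_rowStochastic (hP : ∀ s a s', 0 ≤ P s a s') (hPsum : ∀ s a, ∑ s', P s a s' = 1)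
    {π : S → A → ℝ} (hπ : IsPolicy π) : Pmat P π ∈ Matrix.rowStochastic ℝ S := by
  refine Matrix.mem_rowStochastic_iff_sum.mpr ⟨fun s s' => ?_, fun s => ?_⟩
  · exact sum_nonneg fun a _ => mul_nonneg (hπ.1 s a) (hP s a s')
  · unfold Pmat
    rw [sum_comm]
    simp only [← mul_sum, hPsum, mul_one, hπ.2 s]

variable {γ : ℝ} (hγ0 : 0 ≤ γ) (hγ1 : γ < 1) (hP : ∀ s a s', 0 ≤ P s a s')
  (hPsum : ∀ s a, ∑ s', P s a s' = 1) {π : S → A → ℝ} (hπ : IsPolicy π)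
include hγ0 hγ1 hP hPsum hπ

theorem dPi_pos {μ : S → ℝ} (hμ : ∀ s, 0 < μ s) (s : S) : 0 < dPi γ P μ π s := by
  have hB := Pmat_mem_rowStochastic hP hPsum hπ
  calc 0 < μ s * (1 - γ • Pmat P π)⁻¹ s s :=
        mul_pos (hμ s) (one_pos.trans_le (Matrix.one_le_inv_one_sub_smul_diag hγ0 hγ1 hB s))
    _ ≤ dPi γ P μ π s :=
        single_le_sum (f := fun s₀ => μ s₀ * (1 - γ • Pmat P π)⁻¹ s₀ s)
          (fun s₀ _ => mul_nonneg (hμ s₀).le (Matrix.inv_one_sub_smul_nonneg hγ0 hγ1 hB s₀ s))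
          (mem_univ s)

theorem contDiffAt_dPi {k : WithTop ℕ∞} (μ : S → ℝ) (s : S) :
    ContDiffAt ℝ k (fun π' => dPi γ P μ π' s) π := by
  have hunit := Matrix.isUnit_one_sub_smul_of_mem_rowStochastic hγ0 hγ1
    (Pmat_mem_rowStochastic hP hPsum hπ)
  exact ContDiffAt.sum fun s₀ _ => contDiffAt_const.mul
    (Matrix.contDiffAt_inv_sub_linearMap_apply 1 (γ • pmatLinearMap P) hunit s₀ s)

end OccupationMeasure

theorem stmt_18_general {S A : Type*} [Fintype S] [Fintype A] [Nonempty S] [Nonempty A] [DecidableEq S]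
    (γ : ℝ) (hγ0 : 0 ≤ γ) (hγ1 : γ < 1)
    (P : S → A → S → ℝ) (hP : ∀ s a s', 0 ≤ P s a s')
    (hPsum : ∀ s a, ∑ s', P s a s' = 1)
    (μ : S → ℝ) (hμ : ∀ s, 0 < μ s)
    (R₀ : S → A → ℝ) (α : ℝ)
    (q : ℝ)
    (D : (S → A → ℝ) → S → A → ℝ)
    (hD : ∀ (π : S → A → ℝ) s a, D π s a = dPi γ P μ π s * π s a)
    (F : (S → A → ℝ) → ℝ)
    (hF : ∀ π : S → A → ℝ, F π =
      (∑ s, ∑ a, D π s a * R₀ s a) - α * (∑ s, ∑ a, D π s a ^ q) ^ (1 / q)) :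
    ∀ π : S → A → ℝ, IsPolicy π → (∀ s a, 0 < π s a) →
      ContDiffAt ℝ (⊤ : ℕ∞) F π ∧ ∀ s a, 0 < D π s a := by
  intro π hπ hπpos
  have hDpos : ∀ s a, 0 < D π s a := fun s a =>
    (hD π s a).symm ▸ mul_pos (dPi_pos hγ0 hγ1 hP hPsum hπ hμ s) (hπpos s a)
  have hD_smooth : ∀ s a, ContDiffAt ℝ (⊤ : ℕ∞) (fun π' => D π' s a) π := fun s a => by
    simp only [hD]
    exact (contDiffAt_dPi hγ0 hγ1 hP hPsum hπ μ s).mul (contDiff_apply_apply ℝ ℝ s a).contDiffAt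
  have hsum_pos : 0 < ∑ s, ∑ a, D π s a ^ q :=
    sum_pos (fun s _ => sum_pos (fun a _ => Real.rpow_pos_of_pos (hDpos s a) q) univ_nonempty)
      univ_nonempty
  have hpenalty : ContDiffAt ℝ (⊤ : ℕ∞) (fun π' => (∑ s, ∑ a, D π' s a ^ q) ^ (1 / q)) π :=
    (ContDiffAt.sum fun s _ => ContDiffAt.sum fun a _ =>
      (hD_smooth s a).rpow_const_of_ne (hDpos s a).ne').rpow_const_of_ne hsum_pos.ne'
  refine ⟨?_, hDpos⟩
  rw [funext hF]
  exact (ContDiffAt.sum fun s _ => ContDiffAt.sum fun a _ =>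
    (hD_smooth s a).mul contDiffAt_const).sub (contDiffAt_const.mul hpenalty)

theorem stmt_18 {S A : Type*} [Fintype S] [Fintype A] [Nonempty S] [Nonempty A] [DecidableEq S]
    (γ : ℝ) (hγ0 : 0 ≤ γ) (hγ1 : γ < 1)
    (P : S → A → S → ℝ) (hP : ∀ s a s', 0 ≤ P s a s')
    (hPsum : ∀ s a, ∑ s', P s a s' = 1)
    (μ : S → ℝ) (hμ : ∀ s, 0 < μ s) (hμsum : ∑ s, μ s = 1)
    (R₀ : S → A → ℝ) (α : ℝ) (hα : 0 < α)
    (p q : ℝ) (hp : 1 < p) (hq : q = p / (p - 1))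
    (D : (S → A → ℝ) → S → A → ℝ)
    (hD : ∀ (π : S → A → ℝ) s a, D π s a = dPi γ P μ π s * π s a)
    (F : (S → A → ℝ) → ℝ)
    (hF : ∀ π : S → A → ℝ, F π =
      (∑ s, ∑ a, D π s a * R₀ s a) - α * (∑ s, ∑ a, D π s a ^ q) ^ (1 / q)) :
    ∀ π : S → A → ℝ, IsPolicy π → (∀ s a, 0 < π s a) →
      ContDiffAt ℝ (⊤ : ℕ∞) F π ∧ ∀ s a, 0 < D π s a :=
  stmt_18_general γ hγ0 hγ1 P hP hPsum μ hμ R₀ α q D hD F hF
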